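/- Let f_d : ℝ³ × ℝ^d → ℝ be a function, X = [x₁,...,xₙ] points in ℝ³. Consider problem (P1): minimize over Z ∈ ℝ^{3×n}, h ∈ ℝ^d, R ∈ SO(3), t ∈ ℝ³ the sum ∑ᵢ |f_d(zᵢ, h)|² subject to zᵢ = R xᵢ + t for all i; and problem (P2): minimize over Z, h the sum ∑ᵢ |f_d(R̂ xᵢ + t̂, h)|² where (R̂, t̂) is a minimizer of ∑ᵢ ‖R xᵢ + t − zᵢ‖² over SO(3) × ℝ³. Then the optimal values of (P1) and (P2) are equal: p* = f*. -/

import Mathlib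

open Matrix in
/-- SO(3): 3×3 real matrices with Rᵀ R = 1 and det R = 1. -/
def SO3 : Set (Matrix (Fin 3) (Fin 3) ℝ) :=
  {R | R.transpose * R = 1 ∧ R.det = 1}

/-!
Every feasible point of (P1) is a configuration `Z` that some rigid motion aligns with `X`
exactly, so the alignment residual of `Z` is zero and any minimizer `(R̂, t̂)` of it reproduces
`Z`. Conversely every configuration `R̂ X + t̂` used in (P2) is feasible for (P1). Hence both
problems range over the same set of objective values.
-/

theorem sum_sum_sq_sub_eq_zero_iff {ι κ : Type*} [Fintype ι] [Fintype κ] (u v : ι → κ → ℝ) :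
    ∑ i, ∑ j, ((u i - v i) j) ^ 2 = 0 ↔ u = v := by
  simp only [Fintype.sum_eq_zero_iff_of_nonneg (fun _ => Finset.sum_nonneg fun _ _ => sq_nonneg _),
    Fintype.sum_eq_zero_iff_of_nonneg (fun _ => sq_nonneg _), funext_iff, Pi.zero_apply,
    Pi.sub_apply, sq_eq_zero_iff, sub_eq_zero]

theorem alignment_minimizer_eq_of_exact {ι m k : Type*} [Fintype ι] [Fintype m] [Fintype k]
    {x : ι → k → ℝ} {Z : ι → m → ℝ} {R₀ R : Matrix m k ℝ} {t₀ t : m → ℝ}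
    (hmin : ∑ i, ∑ j, ((R₀.mulVec (x i) + t₀ - Z i) j) ^ 2 ≤
      ∑ i, ∑ j, ((R.mulVec (x i) + t - Z i) j) ^ 2)
    (hZ : ∀ i, Z i = R.mulVec (x i) + t) :
    ∀ i, R₀.mulVec (x i) + t₀ = Z i := by
  have hexact : ∑ i, ∑ j, ((R.mulVec (x i) + t - Z i) j) ^ 2 = 0 :=
    (sum_sum_sq_sub_eq_zero_iff _ _).2 (funext hZ).symm
  have hzero : ∑ i, ∑ j, ((R₀.mulVec (x i) + t₀ - Z i) j) ^ 2 = 0 :=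
    le_antisymm (hexact ▸ hmin)
      (Finset.sum_nonneg fun _ _ => Finset.sum_nonneg fun _ _ => sq_nonneg _)
  exact congrFun ((sum_sum_sq_sub_eq_zero_iff (fun i => R₀.mulVec (x i) + t₀) Z).1 hzero)

theorem stmt0_general (n d : ℕ)
    (fd : (Fin 3 → ℝ) → (Fin d → ℝ) → ℝ)   -- f_d(z, h)
    (x : Fin n → Fin 3 → ℝ)
    -- selection of a minimizer of the inner alignment problem, for each Z
    (A : (Fin n → Fin 3 → ℝ) → Matrix (Fin 3) (Fin 3) ℝ × (Fin 3 → ℝ))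
    (hA : ∀ Z : Fin n → Fin 3 → ℝ, (A Z).1 ∈ SO3 ∧
      ∀ R t, R ∈ SO3 →
        (∑ i, ∑ j, (((A Z).1.mulVec (x i) + (A Z).2 - Z i) j) ^ 2) ≤
        (∑ i, ∑ j, ((R.mulVec (x i) + t - Z i) j) ^ 2))
    -- the set of attainable objective values of (P1)
    (S1 : Set ℝ)
    (hS1 : S1 = {v | ∃ (Z : Fin n → Fin 3 → ℝ) (h : Fin d → ℝ)
        (R : Matrix (Fin 3) (Fin 3) ℝ) (t : Fin 3 → ℝ),
        R ∈ SO3 ∧ (∀ i, Z i = R.mulVec (x i) + t) ∧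
        v = ∑ i, (fd (Z i) h) ^ 2})
    -- the set of attainable objective values of (P2)
    (S2 : Set ℝ)
    (hS2 : S2 = {v | ∃ (Z : Fin n → Fin 3 → ℝ) (h : Fin d → ℝ),
        v = ∑ i, (fd ((A Z).1.mulVec (x i) + (A Z).2) h) ^ 2}) :
    sInf S1 = sInf S2 := by
  suffices S1 = S2 by rw [this]
  subst hS1 hS2
  ext v
  constructor
  · rintro ⟨Z, h, R, t, hR, hZ, rfl⟩
    have hAZ := alignment_minimizer_eq_of_exact ((hA Z).2 R t hR) hZ
    exact ⟨Z, h, by simp only [hAZ]⟩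
  · rintro ⟨Z, h, rfl⟩
    exact ⟨_, h, (A Z).1, (A Z).2, (hA Z).1, fun _ => rfl, rfl⟩

/-- the optimal values of (P1) and (P2) coincide, p* = f*. -/
theorem stmt0 (n d : ℕ)
    (fd : (Fin 3 → ℝ) → (Fin d → ℝ) → ℝ)   -- f_d(z, h)
    (x : Fin n → Fin 3 → ℝ)
    -- selection of a minimizer of the inner alignment problem, for each Z
    (A : (Fin n → Fin 3 → ℝ) → Matrix (Fin 3) (Fin 3) ℝ × (Fin 3 → ℝ))
    (hA : ∀ Z : Fin n → Fin 3 → ℝ, (A Z).1 ∈ SO3 ∧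
      ∀ R t, R ∈ SO3 →
        (∑ i, ∑ j, (((A Z).1.mulVec (x i) + (A Z).2 - Z i) j) ^ 2) ≤
        (∑ i, ∑ j, ((R.mulVec (x i) + t - Z i) j) ^ 2))
    -- the set of attainable objective values of (P1)
    (S1 : Set ℝ)
    (hS1 : S1 = {v | ∃ (Z : Fin n → Fin 3 → ℝ) (h : Fin d → ℝ)
        (R : Matrix (Fin 3) (Fin 3) ℝ) (t : Fin 3 → ℝ),
        R ∈ SO3 ∧ (∀ i, Z i = R.mulVec (x i) + t) ∧
        v = ∑ i, (fd (Z i) h) ^ 2})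
    -- the set of attainable objective values of (P2)
    (S2 : Set ℝ)
    (hS2 : S2 = {v | ∃ (Z : Fin n → Fin 3 → ℝ) (h : Fin d → ℝ),
        v = ∑ i, (fd ((A Z).1.mulVec (x i) + (A Z).2) h) ^ 2})
    -- minimizers exist for both problems
    (h1 : ∃ v, IsLeast S1 v) (h2 : ∃ v, IsLeast S2 v) :
    sInf S1 = sInf S2 :=
  stmt0_general n d fd x A hA S1 hS1 S2 hS2
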